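/- arXiv:2508.08788 — 3 statements merged into one kernel-verified Lean document; each statement's English description precedes it below -/
import Mathlib

section
/- Let p be a prime and ξ a Z-valued random variable with 0 < P(p divides ξ) < 1. Let H be a finite abelian p-group, m a positive integer, v ∈ H^m, and let ξ_1,…,ξ_m be i.i.d. copies of ξ. Then there exists a constant c > 0 (depending only on H and ξ) such that |#H · P(Σ_{i=1}^m ξ_i v_i = 0) − 1| ≤ Σ_{ρ ∈ Ĥ, ρ ≠ 1} exp(−c · ‖v‖_ρ), where ‖v‖_ρ = #{1 ≤ i ≤ m : v_i ∉ ker ρ}. -/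
open MeasureTheory ProbabilityTheory Finset

/-!
Fourier inversion on `H` gives `#H · P(S = 0) - 1 = ∑_{ρ ≠ 1} E ρ(S)` for `S = ∑ ξᵢ • vᵢ`, and by
independence `E ρ(S) = ∏ᵢ E ρ(ξ • vᵢ)`. If `ρ h ≠ 1`, then `ρ (k • h) ≠ 1` whenever `p ∤ k`, because
`h` has `p`-power order. So the unimodular variable `ρ (ξ • h)` moves by at least `d` between the
events `p ∣ ξ` and `p ∤ ξ`, where `d > 0` is the least distance from `1` to a character value other
than `1`. A unimodular random vector that moves by `d` across an event of probability `a` has a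
mean of norm at most `1 - d² / 8 · min a (1 - a) ≤ exp (-c)`, and there is one such factor for each
`i` with `ρ vᵢ ≠ 1`.
-/

namespace AddChar

variable {ι A M : Type*} [AddCommMonoid A] [CommMonoid M]

theorem map_sum_eq_prod (ψ : AddChar A M) (s : Finset ι) (x : ι → A) :
    ψ (∑ i ∈ s, x i) = ∏ i ∈ s, ψ (x i) := by
  classical
  induction s using Finset.induction_on with
  | empty => simp
  | insert i s hi ih => rw [sum_insert hi, prod_insert hi, map_add_eq_mul, ih]

end AddChar

theorem exists_zsmul_zsmul_eq_self {H : Type*} [AddCommGroup H] {p n : ℕ} (hp : p.Prime)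
    {h : H} (hn : (p ^ n : ℤ) • h = 0) {k : ℤ} (hk : ¬ (p : ℤ) ∣ k) :
    ∃ u : ℤ, u • k • h = h := by
  obtain ⟨a, u, hau⟩ :=
    ((Nat.prime_iff_prime_int.mp hp).coprime_iff_not_dvd.mpr hk).pow_left (m := n)
  refine ⟨u, ?_⟩
  calc u • k • h = (a * p ^ n + u * k) • h := by
        rw [add_smul, mul_smul, hn, smul_zero, zero_add, mul_smul]
    _ = h := by rw [hau, one_smul]

theorem AddChar.map_zsmul_ne_one {H M : Type*} [AddCommGroup H] [DivisionMonoid M]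
    {p n : ℕ} (hp : p.Prime) {h : H} (hn : (p ^ n : ℤ) • h = 0) {ψ : AddChar H M}
    (hψ : ψ h ≠ 1) {k : ℤ} (hk : ¬ (p : ℤ) ∣ k) : ψ (k • h) ≠ 1 := by
  obtain ⟨u, hu⟩ := exists_zsmul_zsmul_eq_self hp hn hk
  intro hψk
  rw [← hu, ψ.map_zsmul_eq_zpow, hψk, one_zpow] at hψ
  exact hψ rfl

theorem exists_pos_le_norm_one_sub_addChar (H : Type*) [AddCommGroup H] [Finite H] :
    ∃ d > 0, ∀ (ρ : AddChar H ℂ) (x : H), ρ x ≠ 1 → d ≤ ‖1 - ρ x‖ := by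
  set s := Set.range (fun q : AddChar H ℂ × H => q.1 q.2) \ {1}
  have hs : IsOpen sᶜ := ((Set.finite_range _).sdiff).isClosed.isOpen_compl
  obtain ⟨d, hd0, hball⟩ := Metric.isOpen_iff.mp hs 1 (by simp [s])
  refine ⟨d, hd0, fun ρ x hρx => ?_⟩
  have hmem : ρ x ∉ Metric.ball 1 d := fun hb => hball hb ⟨⟨(ρ, x), rfl⟩, hρx⟩
  simpa [dist_eq_norm, norm_sub_rev] using hmem

section Separation

variable {Ω E : Type*} [MeasurableSpace Ω] {μ : Measure Ω} [IsProbabilityMeasure μ]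
  [NormedAddCommGroup E] {f : Ω → E}

theorem exists_norm_eq_one_inner_eq_norm [InnerProductSpace ℝ E] [Nontrivial E] (x : E) :
    ∃ w : E, ‖w‖ = 1 ∧ inner ℝ w x = ‖x‖ := by
  by_cases hx : x = 0
  · obtain ⟨w, hw⟩ := exists_norm_eq E zero_le_one
    exact ⟨w, hw, by simp [hx]⟩
  · refine ⟨‖x‖⁻¹ • x, by simp [norm_smul, hx], ?_⟩
    rw [real_inner_smul_left, real_inner_self_eq_norm_sq]
    field_simp

theorem integral_norm_sub_sq_eq [InnerProductSpace ℝ E] [CompleteSpace E] (hfi : Integrable f μ)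
    (hf1 : ∀ ω, ‖f ω‖ = 1) {w : E} (hw : ‖w‖ = 1) :
    ∫ ω, ‖w - f ω‖ ^ 2 ∂μ = 2 - 2 * inner ℝ w (∫ ω, f ω ∂μ) := by
  have hpt : ∀ ω, ‖w - f ω‖ ^ 2 = 2 - 2 * inner ℝ w (f ω) := fun ω => by
    rw [norm_sub_sq_real, hw, hf1]; ring
  simp_rw [hpt]
  rw [integral_sub (integrable_const _) ((hfi.const_inner w).const_mul 2), integral_const_mul,
    integral_inner hfi]
  simp

theorem sq_mul_min_measureReal_le_integral_norm_sub_sq {A : Set Ω} {e : ℝ} (he : 0 ≤ e)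
    (hsep : ∀ ω ∈ A, ∀ ω' ∈ Aᶜ, e ≤ ‖f ω - f ω'‖) {w : E}
    (hint : Integrable (fun ω => ‖w - f ω‖ ^ 2) μ) :
    (e / 2) ^ 2 * min (μ.real A) (μ.real Aᶜ) ≤ ∫ ω, ‖w - f ω‖ ^ 2 ∂μ := by
  obtain ⟨S, hS, hfar⟩ : ∃ S, min (μ.real A) (μ.real Aᶜ) ≤ μ.real S ∧
      ∀ ω ∈ S, e / 2 ≤ ‖w - f ω‖ := by
    by_cases hnear : ∃ ω₀ ∈ A, ‖w - f ω₀‖ < e / 2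
    · obtain ⟨ω₀, hω₀, hlt⟩ := hnear
      refine ⟨Aᶜ, min_le_right _ _, fun ω hω => ?_⟩
      have := norm_sub_le_norm_sub_add_norm_sub (f ω₀) w (f ω)
      rw [norm_sub_rev (f ω₀) w] at this
      linarith [hsep ω₀ hω₀ ω hω]
    · push Not at hnear
      exact ⟨A, min_le_left _ _, hnear⟩
  calc (e / 2) ^ 2 * min (μ.real A) (μ.real Aᶜ)
      ≤ (e / 2) ^ 2 * μ.real {ω | (e / 2) ^ 2 ≤ ‖w - f ω‖ ^ 2} := by
        gcongr
        refine hS.trans (measureReal_mono fun ω hω => ?_)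
        exact pow_le_pow_left₀ (by positivity) (hfar ω hω) 2
    _ ≤ ∫ ω, ‖w - f ω‖ ^ 2 ∂μ :=
        mul_meas_ge_le_integral_of_nonneg (ae_of_all _ fun ω => by positivity) hint _

theorem norm_integral_le_one_sub_of_separated [InnerProductSpace ℝ E] [CompleteSpace E]
    (hf : AEStronglyMeasurable f μ) (hf1 : ∀ ω, ‖f ω‖ = 1) {A : Set Ω} {e : ℝ} (he : 0 ≤ e)
    (hsep : ∀ ω ∈ A, ∀ ω' ∈ Aᶜ, e ≤ ‖f ω - f ω'‖) :
    ‖∫ ω, f ω ∂μ‖ ≤ 1 - e ^ 2 / 8 * min (μ.real A) (μ.real Aᶜ) := by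
  obtain ⟨ω₀⟩ := nonempty_of_isProbabilityMeasure μ
  have : Nontrivial E := nontrivial_of_ne (f ω₀) 0 (norm_ne_zero_iff.mp (by simp [hf1]))
  have hfi : Integrable f μ := .of_bound hf 1 (ae_of_all _ fun ω => (hf1 ω).le)
  obtain ⟨w, hw, hwI⟩ := exists_norm_eq_one_inner_eq_norm (∫ ω, f ω ∂μ)
  have hint : Integrable (fun ω => ‖w - f ω‖ ^ 2) μ :=
    .of_bound ((aestronglyMeasurable_const.sub hf).norm.pow 2) 4 (ae_of_all _ fun ω => by
      have := norm_sub_le w (f ω)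
      rw [hw, hf1] at this
      rw [Real.norm_eq_abs, abs_of_nonneg (by positivity)]
      nlinarith [norm_nonneg (w - f ω)])
  have hlow := sq_mul_min_measureReal_le_integral_norm_sub_sq he hsep hint
  rw [integral_norm_sub_sq_eq hfi hf1 hw, hwI] at hlow
  linarith

end Separation

section Characters

variable {Ω H : Type*} [MeasurableSpace Ω] {μ : Measure Ω} [AddCommGroup H]

theorem integral_addChar_sum_zsmul_eq_prod {ι : Type*} [Fintype ι] {ξ : Ω → ℤ}
    {ξs : ι → Ω → ℤ} (hindep : iIndepFun ξs μ) (hid : ∀ i, IdentDistrib (ξs i) ξ μ μ)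
    (ρ : AddChar H ℂ) (v : ι → H) :
    ∫ ω, ρ (∑ i, ξs i ω • v i) ∂μ = ∏ i, ∫ ω, ρ (ξ ω • v i) ∂μ := by
  simp_rw [ρ.map_sum_eq_prod]
  refine (hindep.integral_fun_prod_comp (f := fun i k => ρ (k • v i))
    (fun i => (hid i).aemeasurable_fst)
    fun i => (measurable_of_countable _).aestronglyMeasurable).trans ?_
  exact prod_congr rfl fun i _ =>
    ((hid i).comp (u := fun k : ℤ => ρ (k • v i)) (measurable_of_countable _)).integral_eq

variable [IsProbabilityMeasure μ]

theorem card_mul_measureReal_sub_one_eq_sum_integral_addChar [Fintype H] {Y : Ω → H}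
    (hY : ∀ s : Set H, MeasurableSet (Y ⁻¹' s)) :
    (((Fintype.card H : ℝ) * μ.real {ω | Y ω = 0} - 1 : ℝ) : ℂ) =
      ∑ ρ ∈ univ.filter (fun ρ : AddChar H ℂ => ρ ≠ 1), ∫ ω, ρ (Y ω) ∂μ := by
  classical
  have hint : ∀ ρ : AddChar H ℂ, Integrable (fun ω => ρ (Y ω)) μ := fun ρ =>
    .of_bound (Measurable.aestronglyMeasurable fun t _ => hY (ρ ⁻¹' t)) 1
      (ae_of_all _ fun ω => (ρ.norm_apply _).le)
  have hfourier : ∑ ρ : AddChar H ℂ, ∫ ω, ρ (Y ω) ∂μ =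
      ((Fintype.card H : ℝ) * μ.real {ω | Y ω = 0} : ℝ) := by
    rw [← integral_finsetSum _ fun ρ _ => hint ρ]
    have hind : ∀ ω, ∑ ρ : AddChar H ℂ, ρ (Y ω) =
        {ω | Y ω = 0}.indicator (fun _ => (Fintype.card H : ℂ)) ω := fun ω => by
      simp [AddChar.sum_apply_eq_ite, Set.indicator_apply]
    have hY0 : MeasurableSet {ω | Y ω = 0} := hY {0}
    simp only [hind]
    rw [integral_indicator_const _ hY0]
    simp [mul_comm]
  rw [filter_ne', Complex.ofReal_sub, ← hfourier, ← add_sum_erase _ _ (mem_univ 1)]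
  simp

theorem norm_integral_addChar_sum_zsmul_le {ι : Type*} [Fintype ι] {ξ : Ω → ℤ}
    {ξs : ι → Ω → ℤ} (hindep : iIndepFun ξs μ) (hid : ∀ i, IdentDistrib (ξs i) ξ μ μ)
    (ρ : AddChar H ℂ) (v : ι → H) {c : ℝ}
    (hc : ∀ h, ρ h ≠ 1 → ‖∫ ω, ρ (ξ ω • h) ∂μ‖ ≤ 1 - c) :
    ‖∫ ω, ρ (∑ i, ξs i ω • v i) ∂μ‖ ≤ Real.exp (-c * #{i | ρ (v i) ≠ 1}) := by
  classical
  have hfactor : ∀ i,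
      ‖∫ ω, ρ (ξ ω • v i) ∂μ‖ ≤ Real.exp (-c * if ρ (v i) ≠ 1 then 1 else 0) := by
    intro i
    split_ifs with hi
    · rw [mul_one]
      linarith [hc _ hi, Real.add_one_le_exp (-c)]
    · simp [ρ.map_zsmul_eq_zpow, not_not.mp hi]
  rw [integral_addChar_sum_zsmul_eq_prod hindep hid, norm_prod]
  calc ∏ i, ‖∫ ω, ρ (ξ ω • v i) ∂μ‖
      ≤ ∏ i, Real.exp (-c * if ρ (v i) ≠ 1 then 1 else 0) :=
        prod_le_prod (fun i _ => norm_nonneg _) fun i _ => hfactor i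
    _ = Real.exp (-c * #{i | ρ (v i) ≠ 1}) := by
        rw [← Real.exp_sum, ← mul_sum, sum_boole]

variable [Finite H]

theorem norm_integral_addChar_zsmul_le {p n : ℕ} (hp : p.Prime) {ξ : Ω → ℤ}
    (hξ : AEMeasurable ξ μ) {ρ : AddChar H ℂ} {d : ℝ} (hd0 : 0 ≤ d)
    (hd : ∀ x, ρ x ≠ 1 → d ≤ ‖1 - ρ x‖) {h : H} (hn : (p ^ n : ℤ) • h = 0) (hρh : ρ h ≠ 1) :
    ‖∫ ω, ρ (ξ ω • h) ∂μ‖ ≤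
      1 - d ^ 2 / 8 * min (μ.real {ω | (p : ℤ) ∣ ξ ω}) (μ.real {ω | (p : ℤ) ∣ ξ ω}ᶜ) := by
  refine norm_integral_le_one_sub_of_separated
    ((measurable_of_countable fun k : ℤ => ρ (k • h)).comp_aemeasurable hξ).aestronglyMeasurable
    (fun ω => ρ.norm_apply _) hd0 fun ω hω ω' hω' => ?_
  have hk : ¬ (p : ℤ) ∣ ξ ω' - ξ ω := fun hdvd => hω' (by simpa using dvd_add hω hdvd)
  have hmul : ρ (ξ ω' • h) = ρ (ξ ω • h) * ρ ((ξ ω' - ξ ω) • h) := by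
    rw [← AddChar.map_add_eq_mul, ← add_smul, add_sub_cancel]
  calc d ≤ ‖1 - ρ ((ξ ω' - ξ ω) • h)‖ := hd _ (ρ.map_zsmul_ne_one hp hn hρh hk)
    _ = ‖ρ (ξ ω • h) - ρ (ξ ω' • h)‖ := by
        rw [hmul, ← mul_one_sub, norm_mul, ρ.norm_apply, one_mul]

end Characters

/-- Let `p` be a prime and `ξ` a `ℤ`-valued random variable with
`0 < P(p ∣ ξ) < 1`. Let `H` be a finite abelian `p`-group. Then there is a constant
`c > 0` (depending only on `H` and `ξ`) such that for every `m ≥ 1`, every `v ∈ H^m`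
and i.i.d. copies `ξ₁, …, ξ_m` of `ξ`,
`|#H ⬝ P(∑ ξᵢ • vᵢ = 0) − 1| ≤ ∑_{ρ ≠ 1} exp(−c‖v‖_ρ)`,
where `‖v‖_ρ = #{i : vᵢ ∉ ker ρ}`. -/
theorem stmt0 (p : ℕ) (hp : p.Prime)
    {Ω : Type*} [MeasurableSpace Ω] (μ : Measure Ω) [IsProbabilityMeasure μ]
    (ξ : Ω → ℤ) (hξmeas : Measurable ξ)
    (hξ0 : 0 < μ {ω | (p : ℤ) ∣ ξ ω}) (hξ1 : μ {ω | (p : ℤ) ∣ ξ ω} < 1)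
    (H : Type*) [AddCommGroup H] [Fintype H]
    (hH : ∀ h : H, ∃ n : ℕ, (p ^ n : ℤ) • h = 0) :
    ∃ c : ℝ, 0 < c ∧
      ∀ (m : ℕ), 0 < m → ∀ (v : Fin m → H) (ξs : Fin m → Ω → ℤ),
        (∀ i, Measurable (ξs i)) →
        iIndepFun ξs μ →
        (∀ i, IdentDistrib (ξs i) ξ μ μ) →
        |(Fintype.card H : ℝ) * (μ {ω | ∑ i, ξs i ω • v i = 0}).toReal - 1| ≤
          ∑ ρ ∈ Finset.univ.filter (fun ρ : AddChar H ℂ => ρ ≠ 1),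
            Real.exp (-c * (Finset.univ.filter (fun i => ρ (v i) ≠ 1)).card) := by
  set A := {ω | (p : ℤ) ∣ ξ ω}
  have hA : MeasurableSet A := hξmeas (Set.to_countable {k : ℤ | (p : ℤ) ∣ k}).measurableSet
  have hAc : 0 < μ.real Aᶜ := by
    rw [measureReal_def, prob_compl_eq_one_sub hA]
    exact ENNReal.toReal_pos (tsub_pos_of_lt hξ1).ne' (by simp)
  obtain ⟨d, hd0, hd⟩ := exists_pos_le_norm_one_sub_addChar H
  refine ⟨d ^ 2 / 8 * min (μ.real A) (μ.real Aᶜ),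
    mul_pos (by positivity) (lt_min (ENNReal.toReal_pos hξ0.ne' (by simp)) hAc), ?_⟩
  intro m _ v ξs hmeas hindep hid
  have hS : ∀ s : Set H, MeasurableSet ((fun ω => ∑ i, ξs i ω • v i) ⁻¹' s) := fun s =>
    measurable_pi_lambda _ hmeas
      (Set.to_countable {x : Fin m → ℤ | ∑ i, x i • v i ∈ s}).measurableSet
  rw [← measureReal_def, ← Real.norm_eq_abs, ← Complex.norm_real,
    card_mul_measureReal_sub_one_eq_sum_integral_addChar hS]
  refine (norm_sum_le _ _).trans (sum_le_sum fun ρ _ => ?_)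
  refine norm_integral_addChar_sum_zsmul_le hindep hid ρ v fun h hρh => ?_
  obtain ⟨n, hn⟩ := hH h
  exact norm_integral_addChar_zsmul_le hp hξmeas.aemeasurable hd0.le (hd ρ) hn hρh
end

section
/- Let G be a finite abelian p-group with #G = p^ℓ. For every v ∈ G^n there is a unique 'skeleton', i.e. a unique k ≥ 0, integers 0 ≤ n_1 < ⋯ < n_{k+1} = n, and elements g_1, …, g_k ∈ G such that the subgroups G_i = ⟨g_1,…,g_i⟩ (with G_0 = {0}) are pairwise distinct, v_{n_i+1} = g_i for 1 ≤ i ≤ k, and v_j ∈ G_i for all 0 ≤ i ≤ k and n_i + 1 < j ≤ n_{i+1} (with n_0 = −1). Moreover k ≤ ℓ. -/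
/-!
Call `j` a breakpoint of `v` when `v j` is not in the subgroup generated by the earlier entries.
In a skeleton, an entry in block `i` other than its first lies in `Gᵢ`, which is generated by
earlier entries, while the first entry `gᵢ` of block `i` is not in `Gᵢ`, which contains all
earlier entries; so the positions `nᵢ + 1` are exactly the breakpoints, and these determine the skeleton. Conversely the
increasing enumeration of the breakpoints is a skeleton. Finally `G₀ ⊊ ⋯ ⊊ G_k` have pairwise
distinct orders, all dividing `p ^ ℓ`, which has only `ℓ + 1` divisors.
-/

open Finset

/-- The subgroup generated by the first `i` of the elements `g : Fin k → G`. -/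
def skeletonSub {G : Type*} [AddCommGroup G] {k : ℕ} (g : Fin k → G) (i : ℕ) :
    AddSubgroup G :=
  AddSubgroup.closure {x | ∃ t : Fin k, (t : ℕ) < i ∧ g t = x}

/-- `s = ⟨k, nf, g⟩` is a skeleton of `v ∈ G^n`: here `nf : Fin (k+2) → ℤ` records
`−1 = n₀ < n₁ < ⋯ < n_{k+1} = n` (so `nf 0 = −1` and `0 ≤ n₁` follows), the
subgroups `Gᵢ = ⟨g₁, …, gᵢ⟩` (`G₀ = {0}`) are pairwise distinct, `v_{nᵢ+1} = gᵢ`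
for `1 ≤ i ≤ k`, and `v_j ∈ Gᵢ` for `nᵢ + 1 < j ≤ n_{i+1}`, `0 ≤ i ≤ k`. The
vector `v` uses 0-based indices: 1-based position `j` is 0-based `j − 1`. -/
def IsSkeleton {G : Type*} [AddCommGroup G] (n : ℕ) (v : Fin n → G)
    (s : Σ k : ℕ, (Fin (k + 2) → ℤ) × (Fin k → G)) : Prop :=
  s.2.1 0 = -1 ∧ StrictMono s.2.1 ∧ s.2.1 (Fin.last (s.1 + 1)) = (n : ℤ) ∧
  Function.Injective (fun i : Fin (s.1 + 1) => skeletonSub s.2.2 (i : ℕ)) ∧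
  (∀ i : Fin s.1, ∀ j : Fin n, (j : ℤ) = s.2.1 i.succ.castSucc → v j = s.2.2 i) ∧
  (∀ i : Fin (s.1 + 1), ∀ j : Fin n,
    s.2.1 i.castSucc < (j : ℤ) → (j : ℤ) < s.2.1 i.succ →
      v j ∈ skeletonSub s.2.2 (i : ℕ))

lemma chain_length_le_of_card_eq_prime_pow {G : Type*} [AddGroup G] [Finite G] {p ℓ k : ℕ}
    (hp : p.Prime) (hcard : Nat.card G = p ^ ℓ) (H : Fin (k + 1) → AddSubgroup G)
    (hmono : Monotone H) (hinj : Function.Injective H) : k ≤ ℓ := by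
  have hcard_inj : Function.Injective (fun i => Nat.card (H i)) := by
    intro i j hij
    apply hinj
    rcases le_total i j with h | h
    · exact AddSubgroup.eq_of_le_of_card_ge (hmono h) hij.ge
    · exact (AddSubgroup.eq_of_le_of_card_ge (hmono h) hij.le).symm
  have hdvd (i : Fin (k + 1)) : Nat.card (H i) ∈ (p ^ ℓ).divisors :=
    Nat.mem_divisors.2 ⟨hcard ▸ AddSubgroup.card_addSubgroup_dvd_card (H i),
      (pow_pos hp.pos ℓ).ne'⟩
  have := Finset.card_le_card_of_injOn (s := Finset.univ) _ (fun i _ => hdvd i)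
    hcard_inj.injOn
  simpa [Nat.divisors_prime_pow hp] using this

lemma exists_castSucc_lt_and_le_succ {α : Type*} [LinearOrder α] :
    ∀ {m : ℕ} (f : Fin (m + 1) → α) {x : α}, f 0 < x → x ≤ f (Fin.last m) →
      ∃ i : Fin m, f i.castSucc < x ∧ x ≤ f i.succ
  | 0, f, _, h0, hl => absurd (h0.trans_le hl) (lt_irrefl _)
  | m + 1, f, x, h0, hl => by
    by_cases hx : x ≤ f (Fin.last m).castSucc
    · obtain ⟨i, h1, h2⟩ := exists_castSucc_lt_and_le_succ (f ∘ Fin.castSucc) h0 hx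
      exact ⟨i.castSucc, h1, by rw [Fin.succ_castSucc]; exact h2⟩
    · exact ⟨Fin.last m, lt_of_not_ge hx, hl⟩

lemma strictMono_snoc_cons {α : Type*} [Preorder α] {k : ℕ} {f : Fin k → α} {a b : α}
    (hf : StrictMono f) (ha : ∀ i, a < f i) (hb : ∀ i, f i < b) (hab : a < b) :
    StrictMono (Fin.snoc (α := fun _ => α) (Fin.cons a f) b) := by
  rw [← Fin.insertNth_last', Fin.strictMono_insertNth_iff]
  refine ⟨Fin.strictMono_cons.2 ⟨ha, hf⟩, fun i _ => ?_, fun i hi => absurd hi (by simp)⟩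
  cases i using Fin.cases with
  | zero => simpa using hab
  | succ i => simpa using hb i

section Skeleton

variable {G : Type*} [AddCommGroup G]

lemma skeletonSub_mono {k : ℕ} (g : Fin k → G) : Monotone (skeletonSub g) :=
  fun _ _ hij => AddSubgroup.closure_mono fun _ ⟨t, ht, hx⟩ => ⟨t, ht.trans_le hij, hx⟩

lemma skeletonSub_le_iff {k : ℕ} {g : Fin k → G} {m : ℕ} {H : AddSubgroup G} :
    skeletonSub g m ≤ H ↔ ∀ t : Fin k, (t : ℕ) < m → g t ∈ H := by
  rw [skeletonSub, AddSubgroup.closure_le]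
  exact ⟨fun h t ht => h ⟨t, ht, rfl⟩, fun h _ ⟨t, ht, hx⟩ => hx ▸ h t ht⟩

lemma apply_mem_skeletonSub {k : ℕ} (g : Fin k → G) {t : Fin k} {m : ℕ} (h : (t : ℕ) < m) :
    g t ∈ skeletonSub g m :=
  skeletonSub_le_iff.1 le_rfl t h

lemma skeletonSub_injective_iff {k : ℕ} (g : Fin k → G) :
    Function.Injective (fun i : Fin (k + 1) => skeletonSub g i) ↔
      ∀ t : Fin k, g t ∉ skeletonSub g t := by
  have hmono : Monotone (fun i : Fin (k + 1) => skeletonSub g i) :=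
    fun _ _ h => skeletonSub_mono g h
  rw [← hmono.strictMono_iff_injective, Fin.strictMono_iff_lt_succ]
  refine forall_congr' fun t => ?_
  simp only [Fin.val_castSucc, Fin.val_succ]
  rw [lt_iff_le_not_ge, and_iff_right (skeletonSub_mono g t.val.le_succ), skeletonSub_le_iff,
    not_iff_not]
  refine ⟨fun h => h t t.val.lt_succ_self, fun h s hs => ?_⟩
  rcases Nat.lt_succ_iff_lt_or_eq.1 hs with hs | hs
  · exact apply_mem_skeletonSub g hs
  · rwa [Fin.ext hs]

variable {n : ℕ}

open Classical in
noncomputable def breakpoints (v : Fin n → G) : Finset (Fin n) :=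
  {j | v j ∉ skeletonSub v j}

lemma mem_breakpoints {v : Fin n → G} {j : Fin n} :
    j ∈ breakpoints v ↔ v j ∉ skeletonSub v j := by
  classical
  simp [breakpoints]

lemma notMem_breakpoints {v : Fin n → G} {j : Fin n} :
    j ∉ breakpoints v ↔ v j ∈ skeletonSub v j :=
  mem_breakpoints.not_left

lemma skeletonSub_le_of_forall_breakpoints (v : Fin n → G) {H : AddSubgroup G} (b : ℕ)
    (hH : ∀ j ∈ breakpoints v, (j : ℕ) < b → v j ∈ H) : skeletonSub v b ≤ H := by
  induction b using Nat.strong_induction_on with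
  | _ b ih =>
    refine skeletonSub_le_iff.2 fun t htb => ?_
    by_cases ht : t ∈ breakpoints v
    · exact hH t ht htb
    · exact ih t htb (fun j hj hjt => hH j hj (hjt.trans htb)) (notMem_breakpoints.1 ht)

noncomputable def canonicalSkeleton (v : Fin n → G) : Σ k : ℕ, (Fin (k + 2) → ℤ) × (Fin k → G) :=
  let e := (breakpoints v).orderEmbOfFin rfl
  ⟨_, Fin.snoc (α := fun _ => ℤ) (Fin.cons (-1) fun i => ((e i : ℕ) : ℤ)) n, v ∘ e⟩

theorem isSkeleton_canonicalSkeleton (v : Fin n → G) : IsSkeleton n v (canonicalSkeleton v) := by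
  set e := (breakpoints v).orderEmbOfFin rfl
  set pos : Fin (breakpoints v).card → ℤ := fun i => ((e i : ℕ) : ℤ)
  have hpos : StrictMono pos := fun i j h => by simpa [pos] using e.strictMono h
  have hnf : StrictMono (Fin.snoc (α := fun _ => ℤ) (Fin.cons (-1) pos) n) :=
    strictMono_snoc_cons hpos (fun i => by simp only [pos]; omega) (fun i => by simp [pos])
      (by omega)
  set nf := Fin.snoc (α := fun _ => ℤ) (Fin.cons (-1) pos) n
  have hnf_succ (i) : nf i.succ.castSucc = pos i := by
    simp only [nf, Fin.snoc_castSucc, Fin.cons_succ]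
  have hrange {j : Fin n} (hj : j ∈ breakpoints v) : ∃ t, e t = j := by
    rwa [← Finset.mem_coe, ← Finset.range_orderEmbOfFin _ rfl] at hj
  show IsSkeleton n v ⟨(breakpoints v).card, nf, v ∘ e⟩
  refine ⟨rfl, hnf, by simp [nf], ?_, fun i j hj => ?_, fun i j h1 h2 => ?_⟩
  · refine (skeletonSub_injective_iff _).2 fun t h => ?_
    have hle : skeletonSub (v ∘ e) t ≤ skeletonSub v (e t) :=
      skeletonSub_le_iff.2 fun s hs => apply_mem_skeletonSub v (e.strictMono hs)
    exact mem_breakpoints.1 (Finset.orderEmbOfFin_mem _ _ t) (hle h)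
  · dsimp only at hj ⊢
    rw [hnf_succ] at hj
    congr
    exact Fin.ext (by simpa [pos] using hj)
  · dsimp only at h1 h2 ⊢
    have hj : j ∉ breakpoints v := by
      intro hj
      obtain ⟨t, rfl⟩ := hrange hj
      have hi : i.castSucc < t.succ.castSucc := hnf.lt_iff_lt.1 (by rwa [hnf_succ])
      have hi' : t.succ.castSucc < i.succ := hnf.lt_iff_lt.1 (by rwa [hnf_succ])
      simp only [Fin.lt_def, Fin.val_castSucc, Fin.val_succ] at hi hi'
      omega
    refine skeletonSub_le_of_forall_breakpoints v j (fun j' hj' hj'j => ?_)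
      (notMem_breakpoints.1 hj)
    obtain ⟨t, rfl⟩ := hrange hj'
    have : t.succ.castSucc < i.succ := by
      rw [← hnf.lt_iff_lt, hnf_succ]
      simp only [pos]
      omega
    exact apply_mem_skeletonSub (v ∘ e) (by simpa [Fin.lt_def] using this)

section IsSkeleton

variable {k : ℕ} {v : Fin n → G} {nf : Fin (k + 2) → ℤ} {g : Fin k → G}

lemma IsSkeleton.exists_val_eq (hs : IsSkeleton n v ⟨k, nf, g⟩) (i : Fin k) :
    ∃ j : Fin n, (j : ℤ) = nf i.succ.castSucc := by
  obtain ⟨h0, hmono, hlast, -⟩ := hs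
  have h1 : nf 0 < nf i.succ.castSucc := hmono (Fin.succ_pos i)
  have h2 : nf i.succ.castSucc < nf (Fin.last _) := hmono (Fin.castSucc_lt_last _)
  dsimp only at h0 hlast
  exact ⟨⟨(nf i.succ.castSucc).toNat, by omega⟩, Int.toNat_of_nonneg (by omega)⟩

lemma IsSkeleton.eq_position_or_mem_block (hs : IsSkeleton n v ⟨k, nf, g⟩) (j : Fin n) :
    (∃ i : Fin k, (j : ℤ) = nf i.succ.castSucc) ∨
      ∃ i : Fin (k + 1), nf i.castSucc < j ∧ (j : ℤ) < nf i.succ := by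
  obtain ⟨h0, -, hlast, -⟩ := hs
  dsimp only at h0 hlast
  obtain ⟨i, h1, h2⟩ := exists_castSucc_lt_and_le_succ nf (x := (j : ℤ)) (by omega) (by omega)
  rcases h2.lt_or_eq with h2 | h2
  · exact .inr ⟨i, h1, h2⟩
  · left
    induction i using Fin.lastCases with
    | last => rw [Fin.succ_last, hlast] at h2; omega
    | cast i => exact ⟨i, by rwa [Fin.succ_castSucc] at h2⟩

lemma IsSkeleton.mem_breakpoints_iff (hs : IsSkeleton n v ⟨k, nf, g⟩) {j : Fin n} :
    j ∈ breakpoints v ↔ ∃ i : Fin k, (j : ℤ) = nf i.succ.castSucc := by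
  have ⟨_, hmono, _, hinj, hgen, hblock⟩ := hs
  constructor
  · intro hj
    by_contra! hpos
    obtain ⟨i, h1, h2⟩ := (hs.eq_position_or_mem_block j).resolve_left (by simpa using hpos)
    refine mem_breakpoints.1 hj (skeletonSub_le_iff.2 (fun t ht => ?_) (hblock i j h1 h2))
    obtain ⟨j', hj'⟩ := hs.exists_val_eq t
    rw [← hgen t j' hj']
    have : nf t.succ.castSucc ≤ nf i.castSucc := hmono.monotone (by simpa [Fin.le_def] using ht)
    exact apply_mem_skeletonSub v (by omega)
  · rintro ⟨i, hi⟩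
    rw [mem_breakpoints, hgen i j hi]
    refine fun hmem => (skeletonSub_injective_iff g).1 hinj i
      (skeletonSub_le_iff.2 (fun t ht => ?_) hmem)
    rcases hs.eq_position_or_mem_block t with ⟨s, hts⟩ | ⟨s, h1, h2⟩
    · rw [hgen s t hts]
      have := hmono.lt_iff_lt.1 (show nf s.succ.castSucc < nf i.succ.castSucc by omega)
      simp only [Fin.lt_def, Fin.val_castSucc, Fin.val_succ] at this
      exact apply_mem_skeletonSub g (by omega)
    · have := hmono.lt_iff_lt.1 (show nf s.castSucc < nf i.succ.castSucc by omega)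
      refine skeletonSub_mono g ?_ (hblock s t h1 h2)
      simp only [Fin.lt_def, Fin.val_castSucc, Fin.val_succ] at this
      omega

lemma IsSkeleton.range_positions (hs : IsSkeleton n v ⟨k, nf, g⟩) :
    Set.range (fun i : Fin k => nf i.succ.castSucc) =
      (fun j : Fin n => (j : ℤ)) '' breakpoints v := by
  ext x
  constructor
  · rintro ⟨i, rfl⟩
    obtain ⟨j, hj⟩ := hs.exists_val_eq i
    exact ⟨j, hs.mem_breakpoints_iff.2 ⟨i, hj⟩, hj⟩
  · rintro ⟨j, hj, rfl⟩
    obtain ⟨i, hi⟩ := hs.mem_breakpoints_iff.1 hj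
    exact ⟨i, hi.symm⟩

end IsSkeleton

theorem IsSkeleton.unique {s s' : Σ k : ℕ, (Fin (k + 2) → ℤ) × (Fin k → G)} {v : Fin n → G}
    (hs : IsSkeleton n v s) (hs' : IsSkeleton n v s') : s = s' := by
  obtain ⟨k, nf, g⟩ := s
  obtain ⟨k', nf', g'⟩ := s'
  have hrange := hs.range_positions.trans hs'.range_positions.symm
  have hpos : StrictMono fun i : Fin k => nf i.succ.castSucc :=
    hs.2.1.comp (Fin.strictMono_castSucc.comp Fin.strictMono_succ)
  have hpos' : StrictMono fun i : Fin k' => nf' i.succ.castSucc :=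
    hs'.2.1.comp (Fin.strictMono_castSucc.comp Fin.strictMono_succ)
  obtain rfl : k = k' := by
    simpa only [Set.ncard_range_of_injective hpos.injective,
      Set.ncard_range_of_injective hpos'.injective, Nat.card_eq_fintype_card, Fintype.card_fin]
      using congrArg Set.ncard hrange
  obtain rfl : nf = nf' := by
    have hpos_eq := (hpos.range_inj hpos').1 hrange
    funext i
    induction i using Fin.lastCases with
    | last => exact hs.2.2.1.trans hs'.2.2.1.symm
    | cast i =>
      induction i using Fin.cases with
      | zero => exact hs.1.trans hs'.1.symm
      | succ i => exact congrFun hpos_eq i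
  obtain rfl : g = g' := funext fun i => by
    obtain ⟨j, hj⟩ := hs.exists_val_eq i
    exact (hs.2.2.2.2.1 i j hj).symm.trans (hs'.2.2.2.2.1 i j hj)
  rfl

theorem IsSkeleton.length_le {p ℓ : ℕ} [Finite G] (hp : p.Prime) (hcard : Nat.card G = p ^ ℓ)
    {s : Σ k : ℕ, (Fin (k + 2) → ℤ) × (Fin k → G)} {v : Fin n → G} (hs : IsSkeleton n v s) :
    s.1 ≤ ℓ :=
  chain_length_le_of_card_eq_prime_pow hp hcard _ (fun _ _ h => skeletonSub_mono _ h) hs.2.2.2.1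

end Skeleton

/-- Let `G` be a finite abelian `p`-group with `#G = p^ℓ`. Every
`v ∈ G^n` has a unique skeleton, and its length `k` satisfies `k ≤ ℓ`. -/
theorem stmt6 (p ℓ : ℕ) (hp : p.Prime)
    (G : Type*) [AddCommGroup G] [Fintype G] (hcard : Fintype.card G = p ^ ℓ)
    (n : ℕ) (v : Fin n → G) :
    (∃! s : Σ k : ℕ, (Fin (k + 2) → ℤ) × (Fin k → G), IsSkeleton n v s) ∧
    (∀ s : Σ k : ℕ, (Fin (k + 2) → ℤ) × (Fin k → G), IsSkeleton n v s → s.1 ≤ ℓ) := by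
  have hcard' : Nat.card G = p ^ ℓ := Nat.card_eq_fintype_card.trans hcard
  exact ⟨⟨canonicalSkeleton v, isSkeleton_canonicalSkeleton v,
    fun s hs => hs.unique (isSkeleton_canonicalSkeleton v)⟩, fun s hs => hs.length_le hp hcard'⟩
end

section
/- Let p be a prime and ℓ, n positive integers. The number of tuples of integers 0 ≤ n_1 < n_2 < ⋯ < n_{ℓ+1} = n satisfying n_{i+1} − n_i > 3 log² n for all i = 1, …, ℓ is asymptotically n^ℓ/ℓ! as n → ∞; i.e., the ratio of this count to n^ℓ/ℓ! tends to 1. -/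
/-!
Dropping the last entry identifies increasing tuples ending at `n` with `ℓ`-subsets of
`{0, …, n - 1}`, so there are at most `C(n, ℓ)` well separated ones. Conversely, adding `i * G` to
the `i`-th entry of an increasing tuple ending at `n - ℓ G` turns every gap into one of size
more than `G`; with `G = ⌊3 log² n⌋ + 1` this gives at least `C(n - ℓ G, ℓ)` well separated
tuples. Since `ℓ G = O(log² n) = o(n)`, both bounds are asymptotic to `n^ℓ / ℓ!`.
-/

open Filter Asymptotics Topology Nat

def separatedTuples (ℓ n : ℕ) (g : ℝ) : Set (Fin (ℓ + 1) → ℕ) :=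
  {t | StrictMono t ∧ t (Fin.last ℓ) = n ∧
    ∀ i : Fin ℓ, ((t i.succ : ℝ) - (t i.castSucc : ℝ)) > g}

def increasingTuples (ℓ n : ℕ) : Set (Fin (ℓ + 1) → ℕ) :=
  {t | StrictMono t ∧ t (Fin.last ℓ) = n}

namespace increasingTuples

variable {ℓ n : ℕ}

lemma lt_last {t : Fin (ℓ + 1) → ℕ} (ht : t ∈ increasingTuples ℓ n) (i : Fin ℓ) :
    t i.castSucc < n :=
  ht.2 ▸ ht.1 i.castSucc_lt_last

def equivOrderEmbedding : increasingTuples ℓ n ≃ (Fin ℓ ↪o Fin n) where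
  toFun t := OrderEmbedding.ofStrictMono (fun i => ⟨t.1 i.castSucc, lt_last t.2 i⟩)
    fun _ _ hij => t.2.1 (Fin.castSucc_lt_castSucc_iff.2 hij)
  invFun e := ⟨Fin.snoc (fun i => (e i : ℕ)) n, by
    refine ⟨fun i j hij => ?_, Fin.snoc_last _ _⟩
    induction j using Fin.lastCases with
    | last => obtain ⟨i, rfl⟩ := Fin.exists_castSucc_eq.2 hij.ne; simp
    | cast j =>
      obtain ⟨i, rfl⟩ := Fin.exists_castSucc_eq.2 (hij.trans (Fin.castSucc_lt_last j)).ne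
      simpa using e.strictMono (Fin.castSucc_lt_castSucc_iff.1 hij)⟩
  left_inv t := by
    ext i
    induction i using Fin.lastCases with
    | last => simp [t.2.2]
    | cast i => simp [OrderEmbedding.ofStrictMono]
  right_inv e := by ext; simp

theorem card : Nat.card (increasingTuples ℓ n) = n.choose ℓ := by
  rw [Nat.card_congr (equivOrderEmbedding.trans Set.powersetCard.ofFinEmbEquiv),
    Set.powersetCard.card, Nat.card_eq_fintype_card, Fintype.card_fin]

instance : Finite (increasingTuples ℓ n) := .of_equiv _ equivOrderEmbedding.symm

end increasingTuples

namespace separatedTuples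

variable {ℓ n : ℕ} {g : ℝ}

lemma subset_increasingTuples : separatedTuples ℓ n g ⊆ increasingTuples ℓ n :=
  fun _ ht => ⟨ht.1, ht.2.1⟩

instance : Finite (separatedTuples ℓ n g) := Finite.Set.subset _ subset_increasingTuples

theorem card_le_choose : Nat.card (separatedTuples ℓ n g) ≤ n.choose ℓ :=
  increasingTuples.card (ℓ := ℓ) ▸ Nat.card_mono (Set.toFinite _) subset_increasingTuples

lemma spread_mem {m G : ℕ} (hG : g < G) {v : Fin (ℓ + 1) → ℕ} (hv : v ∈ increasingTuples ℓ m) :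
    (fun i => v i + i * G) ∈ separatedTuples ℓ (m + ℓ * G) g := by
  refine ⟨fun i j hij => ?_, by simp [hv.2], fun i => ?_⟩
  · exact Nat.add_lt_add_of_lt_of_le (hv.1 hij) (Nat.mul_le_mul_right G hij.le)
  · have : ((v i.castSucc + 1 : ℕ) : ℝ) ≤ v i.succ := by exact_mod_cast hv.1 i.castSucc_lt_succ
    simp only [Fin.val_succ, Fin.val_castSucc, Nat.cast_add, Nat.cast_mul, Nat.cast_one] at this ⊢
    linarith

theorem choose_sub_le_card {G : ℕ} (hG : g < G) :
    (n - ℓ * G).choose ℓ ≤ Nat.card (separatedTuples ℓ n g) := by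
  rcases le_or_gt (ℓ * G) n with h | h
  · obtain ⟨m, rfl⟩ := Nat.exists_eq_add_of_le' h
    rw [Nat.add_sub_cancel, ← increasingTuples.card]
    refine Nat.card_le_card_of_injective (fun v => ⟨_, spread_mem hG v.2⟩) fun v w hvw => ?_
    ext i
    simpa using congrFun (congrArg Subtype.val hvw) i
  · have hℓ : ℓ ≠ 0 := by rintro rfl; simp at h
    simp [Nat.sub_eq_zero_of_le h.le, Nat.choose_eq_zero_of_lt (Nat.pos_of_ne_zero hℓ)]

end separatedTuples

lemma tendsto_natCast_sub_div {c : ℕ → ℕ} (hc : Tendsto (fun n => (c n : ℝ) / n) atTop (𝓝 0)) :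
    Tendsto (fun n => ((n - c n : ℕ) : ℝ) / n) atTop (𝓝 1) := by
  have hle : ∀ᶠ n : ℕ in atTop, c n ≤ n := by
    filter_upwards [hc.eventually_lt_const zero_lt_one, eventually_gt_atTop 0] with n hlt hn
    rw [div_lt_one (by positivity)] at hlt
    exact_mod_cast hlt.le
  have hsub : Tendsto (fun n => 1 - (c n : ℝ) / n) atTop (𝓝 1) := by
    simpa using tendsto_const_nhds.sub hc
  refine hsub.congr' ?_
  filter_upwards [hle, eventually_gt_atTop 0] with n hle hn
  rw [Nat.cast_sub hle, sub_div, div_self (by positivity)]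

theorem tendsto_choose_sub_div {c : ℕ → ℕ} (hc : Tendsto (fun n => (c n : ℝ) / n) atTop (𝓝 0))
    (ℓ : ℕ) :
    Tendsto (fun n : ℕ => ((n - c n).choose ℓ : ℝ) / ((n : ℝ) ^ ℓ / ℓ !)) atTop (𝓝 1) := by
  have hm := tendsto_natCast_sub_div hc
  have hm_atTop : Tendsto (fun n => n - c n) atTop atTop := by
    refine tendsto_natCast_atTop_iff.1 <|
      (hm.pos_mul_atTop one_pos tendsto_natCast_atTop_atTop).congr' ?_
    filter_upwards [eventually_gt_atTop 0] with n hn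
    exact div_mul_cancel₀ _ (by positivity)
  have hpow : (fun n => ((n - c n : ℕ) : ℝ) ^ ℓ / ℓ !) ~[atTop] fun n => (n : ℝ) ^ ℓ / ℓ ! := by
    refine isEquivalent_of_tendsto_one <| (by simpa using hm.pow ℓ :
      Tendsto (fun n => (((n - c n : ℕ) : ℝ) / n) ^ ℓ) _ _).congr' ?_
    filter_upwards [eventually_gt_atTop 0] with n hn
    simp only [Pi.div_apply, div_pow]
    field_simp
  refine (isEquivalent_iff_tendsto_one ?_).1
    (((isEquivalent_choose ℓ).comp_tendsto hm_atTop).trans hpow)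
  filter_upwards [eventually_gt_atTop 0] with n hn
  positivity

lemma tendsto_mul_floor_log_sq_div (ℓ : ℕ) :
    Tendsto (fun n : ℕ => ((ℓ * (⌊3 * Real.log n ^ 2⌋₊ + 1) : ℕ) : ℝ) / n) atTop (𝓝 0) := by
  have hlog : Tendsto (fun n : ℕ => Real.log n ^ 2 / n) atTop (𝓝 0) := by
    simpa [Function.comp_def] using
      (Real.tendsto_pow_log_div_mul_add_atTop 1 0 2 one_ne_zero).comp tendsto_natCast_atTop_atTop
  have hbound : Tendsto (fun n : ℕ => ℓ * (3 * Real.log n ^ 2 + 1) / n) atTop (𝓝 0) := by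
    have := ((hlog.const_mul 3).add tendsto_one_div_atTop_nhds_zero_nat).const_mul (ℓ : ℝ)
    simp only [mul_zero, add_zero] at this
    exact this.congr fun n => by ring
  refine tendsto_of_tendsto_of_tendsto_of_le_of_le' tendsto_const_nhds hbound
    (Eventually.of_forall fun n => by positivity) ?_
  filter_upwards [eventually_gt_atTop 0] with n hn
  have := Nat.floor_le (by positivity : 0 ≤ 3 * Real.log n ^ 2)
  push_cast
  gcongr

theorem stmt17_general (ℓ : ℕ) :
    Tendsto
      (fun n : ℕ =>
        ((Nat.card
          {t : Fin (ℓ + 1) → ℕ |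
            StrictMono t ∧ t (Fin.last ℓ) = n ∧
            ∀ i : Fin ℓ,
              ((t i.succ : ℝ) - (t i.castSucc : ℝ)) > 3 * (Real.log n) ^ 2}) : ℝ) /
          ((n : ℝ) ^ ℓ / (Nat.factorial ℓ)))
      atTop (nhds 1) := by
  change Tendsto (fun n : ℕ => (Nat.card (separatedTuples ℓ n (3 * Real.log n ^ 2)) : ℝ) /
    ((n : ℝ) ^ ℓ / ℓ !)) atTop (𝓝 1)
  have hlower := tendsto_choose_sub_div (tendsto_mul_floor_log_sq_div ℓ) ℓ
  have hupper := tendsto_choose_sub_div (c := 0) (by simp) ℓ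
  refine tendsto_of_tendsto_of_tendsto_of_le_of_le hlower hupper (fun n => ?_) fun n => ?_
  · gcongr
    exact Nat.cast_le.2 <| separatedTuples.choose_sub_le_card <| by
      exact_mod_cast Nat.lt_floor_add_one _
  · gcongr
    exact Nat.cast_le.2 separatedTuples.card_le_choose

/-- Let `ℓ` be a positive integer. The number of tuples of integers
`0 ≤ n₁ < n₂ < ⋯ < n_{ℓ+1} = n` with `n_{i+1} − nᵢ > 3 log² n` for all `i = 1, …, ℓ`
is asymptotic to `n^ℓ/ℓ!` as `n → ∞`. -/
theorem stmt17 (ℓ : ℕ) (hℓ : 0 < ℓ) :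
    Tendsto
      (fun n : ℕ =>
        ((Nat.card
          {t : Fin (ℓ + 1) → ℕ |
            StrictMono t ∧ t (Fin.last ℓ) = n ∧
            ∀ i : Fin ℓ,
              ((t i.succ : ℝ) - (t i.castSucc : ℝ)) > 3 * (Real.log n) ^ 2}) : ℝ) /
          ((n : ℝ) ^ ℓ / (Nat.factorial ℓ)))
      atTop (nhds 1) :=
  stmt17_general ℓ
end
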